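/- Consider the n-qubit network Lindblad equation with diffusive coupling on a connected weighted graph, let 𝒬 : M → M be the induced Laplacian superoperator 𝒬ρ := Σ_{1≤j<k≤n} a_{jk}(ρ − Θ_{jk}ρ) with smallest nonzero eigenvalue λ_m(𝒬) > 0, and let ‖𝒜‖ be the operator norm of 𝒜 with respect to ‖·‖_F. If a K-solution ρ additionally satisfies P*(ρ(0)) = ρ(0) (i.e., the initial state is permutation invariant), then for all t ≥ 0: ‖ρ(t) − P*(ρ(t))‖_F ≤ ‖𝒜‖/(Kλ_m(𝒬)); in particular, for every η > 0 there exists K* > 0 such that for all K ≥ K* every such K-solution satisfies ‖ρ(t) − P*(ρ(t))‖_F ≤ η for all t ≥ 0. -/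

import Mathlib

/-! Write `y = ρ - P*ρ`. Since `P*` averages over all relabellings of the qubits, it commutes
with every swap, so it annihilates the coupling term, and `𝒬` kills the range of `P*`; hence
`y' = (1 - P*) 𝒜ρ - K 𝒬 y`. For the Frobenius inner product `P*` and `𝒬` are self-adjoint, and
by connectivity of the graph the kernel of `𝒬` is exactly the range of `P*`. So `y ⟂ ker 𝒬`
and the spectral gap gives `Re ⟪y, 𝒬 y⟫ ≥ λ ‖y‖²`. Density matrices have Frobenius norm at
most `1`, so `d/dt ‖y‖² ≤ 2 ‖𝒜‖ ‖y‖ - 2 K λ ‖y‖²`: the ball of radius `‖𝒜‖ / (K λ)` is forward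
invariant, and `y(0) = 0` lies in it. -/

open Finset Matrix
open scoped ComplexOrder

attribute [local instance] Matrix.frobeniusSeminormedAddCommGroup
  Matrix.frobeniusNormedAddCommGroup Matrix.frobeniusNormedSpace

noncomputable section

/-- Operators on `n` qubits, normed by the Frobenius norm (local instance above). -/
abbrev QMat (n : ℕ) : Type := Matrix (Fin n → Fin 2) (Fin n → Fin 2) ℂ

/-- The Lindblad dissipator `D(L)`. -/
def dissip {n : ℕ} (L X : QMat n) : QMat n :=
  L * X * Lᴴ - (1 / 2 : ℂ) • (Lᴴ * L * X + X * (Lᴴ * L))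

/-- The drift superoperator `𝒜`. -/
def drift {n : ℕ} {ι : Type} [Fintype ι] (hbar : ℝ) (H : QMat n) (γ : ι → ℝ)
    (L : ι → QMat n) (X : QMat n) : QMat n :=
  (-(Complex.I / (hbar : ℂ))) • (H * X - X * H) + ∑ l, (γ l : ℂ) • dissip (L l) X

/-- The swap conjugation `Θ_{jk}ρ = U_{jk} ρ U_{jk}†`. -/
def swapConj {n : ℕ} (j k : Fin n) (X : QMat n) : QMat n :=
  Matrix.of fun f g => X (f ∘ Equiv.swap j k) (g ∘ Equiv.swap j k)

/-- The diffusive coupling term of the network Lindblad equation. -/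
def coupling {n : ℕ} (a : Fin n → Fin n → ℝ) (X : QMat n) : QMat n :=
  ∑ j, ∑ k, if j < k then a j k • (swapConj j k X - X) else 0

/-- The permutation-invariant projection `P*`. -/
def permProj {n : ℕ} (X : QMat n) : QMat n :=
  Matrix.of fun f g => (n.factorial : ℂ)⁻¹ * ∑ π : Equiv.Perm (Fin n), X (f ∘ π) (g ∘ π)

/-- The induced Laplacian superoperator `𝒬`. -/
def lapSup {n : ℕ} (a : Fin n → Fin n → ℝ) (X : QMat n) : QMat n :=
  ∑ j, ∑ k, if j < k then a j k • (X - swapConj j k X) else 0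

open scoped InnerProductSpace

abbrev Matrix.frobeniusInnerProductSpace {m n 𝕜 : Type*} [Fintype m] [Fintype n] [RCLike 𝕜] :
    InnerProductSpace 𝕜 (Matrix m n 𝕜) where
  inner A B := ∑ i, ∑ j, ⟪A i j, B i j⟫_𝕜
  norm_sq_eq_re_inner A := by
    rw [frobenius_norm_def, ← Real.rpow_natCast, ← Real.rpow_mul (by positivity)]
    simp [map_sum]
  conj_inner_symm A B := by simp only [map_sum, inner_conj_symm]
  add_left A B C := by simp only [add_apply, inner_add_left, sum_add_distrib]
  smul_left A B c := by simp only [smul_apply, inner_smul_left, mul_sum]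

attribute [local instance] Matrix.frobeniusInnerProductSpace

namespace Matrix

variable {m n 𝕜 : Type*} [Fintype m] [Fintype n] [RCLike 𝕜]

theorem frobenius_inner_def (A B : Matrix m n 𝕜) :
    ⟪A, B⟫_𝕜 = ∑ i, ∑ j, ⟪A i j, B i j⟫_𝕜 := rfl

theorem frobenius_inner_eq_trace (A B : Matrix m n 𝕜) : ⟪A, B⟫_𝕜 = (Aᴴ * B).trace := by
  simp only [frobenius_inner_def, trace, diag, mul_apply, conjTranspose_apply]
  rw [sum_comm]
  simp [mul_comm]

end Matrix

theorem norm_le_one_of_posSemidef_of_trace_eq_one {m : Type*} [Fintype m] [DecidableEq m]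
    {ρ : Matrix m m ℂ} (hρ : ρ.PosSemidef) (htr : ρ.trace = 1) : ‖ρ‖ ≤ 1 := by
  obtain ⟨S, hS, hSρ⟩ : ∃ S : Matrix m m ℂ, Sᴴ = S ∧ S * S = ρ := by
    open scoped MatrixOrder in
    exact ⟨CFC.sqrt ρ, (CFC.sqrt_nonneg ρ).posSemidef.isHermitian,
      CFC.sqrt_mul_sqrt_self ρ hρ.nonneg⟩
  have hS1 : ‖S‖ ^ 2 = 1 := by
    rw [@norm_sq_eq_re_inner ℂ, Matrix.frobenius_inner_eq_trace, hS, hSρ, htr, RCLike.one_re]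
  calc ‖ρ‖ = ‖S * S‖ := by rw [hSρ]
    _ ≤ ‖S‖ * ‖S‖ := Matrix.frobenius_norm_mul S S
    _ = 1 := by rw [← sq, hS1]

theorem le_of_hasDerivAt_neg_of_lt {G G' : ℝ → ℝ} {a c : ℝ}
    (hG : ∀ t ≥ a, HasDerivAt G (G' t) t) (ha : G a ≤ c)
    (hneg : ∀ t ≥ a, c < G t → G' t < 0) : ∀ t ≥ a, G t ≤ c := by
  intro t ht
  -- the comparison principle wants `G' < B'` where `G = B`, which fails for `B = c`; use `c + ε`
  refine le_of_forall_pos_le_add fun ε hε => ?_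
  refine image_le_of_deriv_right_lt_deriv_boundary' (B := fun _ => c + ε) (B' := 0)
    (fun x hx => (hG x hx.1).continuousAt.continuousWithinAt)
    (fun x hx => (hG x hx.1).hasDerivWithinAt) (by linarith) continuousOn_const
    (fun x _ => hasDerivWithinAt_const _ _ _) (fun x hx hGx => hneg x hx.1 (by linarith))
    ⟨ht, le_rfl⟩

theorem HasDerivAt.norm_sq_of_rclike {𝕜 E : Type*} [RCLike 𝕜] [NormedAddCommGroup E]
    [InnerProductSpace 𝕜 E] [NormedSpace ℝ E] [IsScalarTower ℝ 𝕜 E] {y : ℝ → E} {y' : E} {t : ℝ}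
    (hy : HasDerivAt y y' t) :
    HasDerivAt (‖y ·‖ ^ 2) (2 * RCLike.re ⟪y t, y'⟫_𝕜) t := by
  have h := RCLike.reCLM.hasFDerivAt.comp_hasDerivAt t (hy.inner 𝕜 hy)
  simp only [Function.comp_def, RCLike.reCLM_apply, map_add, inner_re_symm y',
    inner_self_eq_norm_sq] at h
  rwa [two_mul]

theorem norm_le_of_re_inner_deriv_le {𝕜 E : Type*} [RCLike 𝕜] [NormedAddCommGroup E]
    [InnerProductSpace 𝕜 E] [NormedSpace ℝ E] [IsScalarTower ℝ 𝕜 E] {y y' : ℝ → E} {a α β : ℝ}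
    (hβ : 0 < β)
    (hy : ∀ t ≥ a, HasDerivAt y (y' t) t) (ha : ‖y a‖ ≤ α / β)
    (hdiss : ∀ t ≥ a, RCLike.re ⟪y t, y' t⟫_𝕜 ≤ α * ‖y t‖ - β * ‖y t‖ ^ 2) :
    ∀ t ≥ a, ‖y t‖ ≤ α / β := by
  have hC : 0 ≤ α / β := (norm_nonneg _).trans ha
  intro t ht
  refine (pow_le_pow_iff_left₀ (norm_nonneg _) hC two_ne_zero).1 <|
    le_of_hasDerivAt_neg_of_lt (fun s hs => (hy s hs).norm_sq_of_rclike (𝕜 := 𝕜))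
      (pow_le_pow_left₀ (norm_nonneg _) ha 2) (fun s hs hlt => ?_) t ht
  have hlt : α / β < ‖y s‖ := (pow_lt_pow_iff_left₀ hC (norm_nonneg _) two_ne_zero).1 hlt
  have : α < β * ‖y s‖ := by rwa [div_lt_iff₀' hβ] at hlt
  nlinarith [hdiss s hs]

theorem SimpleGraph.Connected.closure_swaps_eq_top {α : Type*} [Finite α] [DecidableEq α]
    {G : SimpleGraph α} (hG : G.Connected) :
    Subgroup.closure {σ : Equiv.Perm α | ∃ u v, G.Adj u v ∧ σ = Equiv.swap u v} = ⊤ := by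
  set S := {σ : Equiv.Perm α | ∃ u v, G.Adj u v ∧ σ = Equiv.swap u v}
  have hS : ∀ σ ∈ S, σ.IsSwap := by
    rintro _ ⟨u, v, huv, rfl⟩
    exact ⟨u, v, huv.ne, rfl⟩
  have hwalk : ∀ u v, G.Walk u v → ∃ g ∈ Subgroup.closure S, g u = v := by
    intro u v p
    induction p with
    | nil => exact ⟨1, one_mem _, rfl⟩
    | cons h _ ih =>
      obtain ⟨g, hg, hgv⟩ := ih
      exact ⟨g * Equiv.swap _ _, mul_mem hg (Subgroup.subset_closure ⟨_, _, h, rfl⟩),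
        by simp [hgv]⟩
  have : MulAction.IsPretransitive (Subgroup.closure S) α := ⟨fun u v =>
    let ⟨g, hg, hgv⟩ := hwalk u v (hG.preconnected u v).some
    ⟨⟨g, hg⟩, hgv⟩⟩
  exact closure_of_isSwap_of_isPretransitive hS

theorem LinearMap.IsSymmetric.mul_norm_sq_le_re_inner_apply {𝕜 E : Type*} [RCLike 𝕜]
    [NormedAddCommGroup E] [InnerProductSpace 𝕜 E] [FiniteDimensional 𝕜 E] {T : E →ₗ[𝕜] E}
    (hT : T.IsSymmetric) {lam : ℝ}
    (hlam : ∀ (μ : ℝ) (x : E), μ ≠ 0 → x ≠ 0 → T x = (μ : 𝕜) • x → lam ≤ μ) {x : E}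
    (hx : ∀ z, T z = 0 → ⟪z, x⟫_𝕜 = 0) :
    lam * ‖x‖ ^ 2 ≤ RCLike.re ⟪x, T x⟫_𝕜 := by
  let b := hT.eigenvectorBasis rfl
  let μ := hT.eigenvalues rfl
  have hb : ∀ i, T (b i) = (μ i : 𝕜) • b i := hT.apply_eigenvectorBasis rfl
  have hTx : RCLike.re ⟪x, T x⟫_𝕜 = ∑ i, μ i * ‖⟪x, b i⟫_𝕜‖ ^ 2 := by
    rw [← b.sum_inner_mul_inner x (T x), map_sum]
    refine sum_congr rfl fun i _ => ?_
    rw [← hT, hb, inner_smul_left, RCLike.conj_ofReal, ← inner_conj_symm (b i) x, mul_left_comm,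
      RCLike.mul_conj, ← RCLike.ofReal_pow, ← RCLike.ofReal_mul, RCLike.ofReal_re]
  rw [hTx, ← b.sum_sq_norm_inner_left x, mul_sum]
  refine sum_le_sum fun i _ => ?_
  by_cases hμ : μ i = 0
  · have : ⟪x, b i⟫_𝕜 = 0 :=
      inner_eq_zero_symm.1 <| hx _ (by rw [hb, hμ, RCLike.ofReal_zero, zero_smul])
    simp [this]
  · exact mul_le_mul_of_nonneg_right (hlam _ _ hμ (b.orthonormal.ne_zero i) (hb i)) (sq_nonneg _)

section PermutationAction

variable {n : ℕ}

instance : DistribMulAction (Equiv.Perm (Fin n)) (QMat n) where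
  smul π X := X.submatrix (· ∘ π) (· ∘ π)
  one_smul _ := rfl
  mul_smul _ _ _ := rfl
  smul_zero _ := rfl
  smul_add _ _ _ := rfl

instance {R : Type*} [SMul R ℂ] : SMulCommClass (Equiv.Perm (Fin n)) R (QMat n) :=
  ⟨fun _ _ _ => rfl⟩

theorem perm_smul_apply (π : Equiv.Perm (Fin n)) (X : QMat n) (f g : Fin n → Fin 2) :
    (π • X) f g = X (f ∘ π) (g ∘ π) := rfl

theorem swapConj_eq_smul (j k : Fin n) (X : QMat n) : swapConj j k X = Equiv.swap j k • X := rfl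

theorem inner_perm_smul_perm_smul (π : Equiv.Perm (Fin n)) (X Y : QMat n) :
    ⟪π • X, π • Y⟫_ℂ = ⟪X, Y⟫_ℂ := by
  let e : (Fin n → Fin 2) ≃ (Fin n → Fin 2) := π.symm.arrowCongr (Equiv.refl _)
  simp only [Matrix.frobenius_inner_def, perm_smul_apply]
  exact (Equiv.sum_comp e fun f => ∑ g, ⟪X f (g ∘ π), Y f (g ∘ π)⟫_ℂ).trans
    (sum_congr rfl fun f _ => Equiv.sum_comp e fun g => ⟪X f g, Y f g⟫_ℂ)

theorem inner_perm_smul_left (π : Equiv.Perm (Fin n)) (X Y : QMat n) :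
    ⟪π • X, Y⟫_ℂ = ⟪X, π⁻¹ • Y⟫_ℂ := by
  rw [← inner_perm_smul_perm_smul π X (π⁻¹ • Y), smul_inv_smul]

theorem norm_perm_smul (π : Equiv.Perm (Fin n)) (X : QMat n) : ‖π • X‖ = ‖X‖ := by
  rw [norm_eq_sqrt_re_inner (𝕜 := ℂ), norm_eq_sqrt_re_inner (𝕜 := ℂ), inner_perm_smul_perm_smul]

theorem permProj_eq_smul_sum (X : QMat n) :
    permProj X = (n.factorial : ℂ)⁻¹ • ∑ π : Equiv.Perm (Fin n), π • X := by
  ext f g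
  simp [permProj, Matrix.sum_apply, perm_smul_apply]

theorem perm_smul_permProj (σ : Equiv.Perm (Fin n)) (X : QMat n) :
    σ • permProj X = permProj X := by
  ext f g
  simp only [permProj, Matrix.of_apply, perm_smul_apply]
  congr 1
  exact Equiv.sum_comp (Equiv.mulLeft σ) fun π => X (f ∘ π) (g ∘ π)

theorem permProj_eq_self_of_forall_perm_smul_eq {X : QMat n}
    (hX : ∀ π : Equiv.Perm (Fin n), π • X = X) : permProj X = X := by
  have hfact : (n.factorial : ℂ) ≠ 0 := Nat.cast_ne_zero.2 n.factorial_ne_zero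
  simp only [permProj_eq_smul_sum, hX, sum_const, card_univ, Fintype.card_perm, Fintype.card_fin,
    ← Nat.cast_smul_eq_nsmul ℂ, smul_smul, inv_mul_cancel₀ hfact, one_smul]

theorem permProj_permProj (X : QMat n) : permProj (permProj X) = permProj X :=
  permProj_eq_self_of_forall_perm_smul_eq fun π => perm_smul_permProj π X

variable (n) in
def permProjₗ : QMat n →ₗ[ℂ] QMat n where
  toFun := permProj
  map_add' X Y := by ext; simp [permProj, sum_add_distrib, mul_add]
  map_smul' c X := by ext; simp [permProj, mul_sum, mul_left_comm]

theorem permProjₗ_apply (X : QMat n) : permProjₗ n X = permProj X := rfl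

theorem isSymmetric_permProjₗ : (permProjₗ n).IsSymmetric := fun X Y => by
  simp only [permProjₗ_apply, permProj_eq_smul_sum, inner_smul_left, inner_smul_right, sum_inner,
    inner_sum, inner_perm_smul_left, map_inv₀, map_natCast]
  congr 1
  exact Equiv.sum_comp (Equiv.inv _) fun π : Equiv.Perm (Fin n) => ⟪X, π • Y⟫_ℂ

theorem permProj_sub_permProj (X : QMat n) : permProj (X - permProj X) = 0 := by
  rw [← permProjₗ_apply, map_sub, permProjₗ_apply, permProjₗ_apply, permProj_permProj, sub_self]

theorem inner_sub_permProj_permProj (X Y : QMat n) :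
    ⟪X - permProj X, permProj Y⟫_ℂ = 0 := by
  rw [← permProjₗ_apply Y, ← isSymmetric_permProjₗ, permProjₗ_apply, permProj_sub_permProj,
    inner_zero_left]

end PermutationAction

section Laplacian

variable {n : ℕ} (a : Fin n → Fin n → ℝ)

def lapSupₗ : QMat n →ₗ[ℂ] QMat n where
  toFun := lapSup a
  map_add' X Y := by
    simp only [lapSup, swapConj_eq_smul, ← sum_add_distrib]
    refine sum_congr rfl fun j _ => sum_congr rfl fun k _ => ?_
    split_ifs
    · rw [← smul_add, smul_add (Equiv.swap j k)]; congr 1; abel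
    · simp
  map_smul' c X := by
    simp only [lapSup, swapConj_eq_smul, smul_sum, RingHom.id_apply]
    refine sum_congr rfl fun j _ => sum_congr rfl fun k _ => ?_
    split_ifs
    · rw [smul_comm (Equiv.swap j k) c X, ← smul_sub, smul_comm c (a j k)]
    · simp

theorem lapSupₗ_apply (X : QMat n) : lapSupₗ a X = lapSup a X := rfl

theorem isSymmetric_lapSupₗ : (lapSupₗ a).IsSymmetric := fun X Y => by
  simp only [lapSupₗ_apply, lapSup, swapConj_eq_smul, RCLike.real_smul_eq_coe_smul (K := ℂ),
    sum_inner, inner_sum, apply_ite (inner ℂ · Y), apply_ite (inner ℂ X), inner_zero_left,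
    inner_zero_right, inner_smul_real_left, inner_smul_real_right, inner_sub_left, inner_sub_right,
    inner_perm_smul_left, Equiv.swap_inv]

theorem coupling_eq_neg_lapSup (X : QMat n) : coupling a X = -lapSup a X := by
  simp only [coupling, lapSup, ← sum_neg_distrib]
  refine sum_congr rfl fun j _ => sum_congr rfl fun k _ => ?_
  split_ifs <;> simp [← smul_neg]

theorem lapSup_permProj (X : QMat n) : lapSup a (permProj X) = 0 := by
  simp [lapSup, swapConj_eq_smul, perm_smul_permProj]

theorem re_inner_lapSup_self (X : QMat n) :
    RCLike.re ⟪X, lapSup a X⟫_ℂ =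
      ∑ j, ∑ k, if j < k then a j k * (‖X - Equiv.swap j k • X‖ ^ 2 / 2) else 0 := by
  have hterm : ∀ π : Equiv.Perm (Fin n),
      RCLike.re ⟪X, X - π • X⟫_ℂ = ‖X - π • X‖ ^ 2 / 2 := fun π => by
    rw [@norm_sub_sq ℂ, norm_perm_smul, inner_sub_right, map_sub, @inner_self_eq_norm_sq ℂ]
    ring
  simp only [lapSup, swapConj_eq_smul, RCLike.real_smul_eq_coe_smul (K := ℂ), inner_sum, map_sum,
    apply_ite (inner ℂ X), inner_zero_right, apply_ite RCLike.re, map_zero, inner_smul_real_right,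
    smul_eq_mul, RCLike.re_ofReal_mul, hterm]

end Laplacian

section Kernel

variable {n : ℕ} {a : Fin n → Fin n → ℝ}

theorem swap_smul_eq_of_lapSup_eq_zero (ha_nonneg : ∀ j k, 0 ≤ a j k) {X : QMat n}
    (hX : lapSup a X = 0) {j k : Fin n} (hjk : j < k) (hajk : 0 < a j k) :
    Equiv.swap j k • X = X := by
  have hterms_nonneg : ∀ j k : Fin n,
      0 ≤ if j < k then a j k * (‖X - Equiv.swap j k • X‖ ^ 2 / 2) else 0 := fun j k => by
    split_ifs
    · exact mul_nonneg (ha_nonneg j k) (by positivity)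
    · exact le_rfl
  have hsum := re_inner_lapSup_self a X
  rw [hX, inner_zero_right, map_zero, eq_comm] at hsum
  have hjk_term := (sum_eq_zero_iff_of_nonneg fun k _ => hterms_nonneg j k).1
    ((sum_eq_zero_iff_of_nonneg fun j _ => sum_nonneg fun k _ => hterms_nonneg j k).1 hsum j
      (mem_univ j)) k (mem_univ k)
  rw [if_pos hjk, mul_eq_zero, or_iff_right hajk.ne', div_eq_zero_iff, or_iff_left two_ne_zero,
    sq_eq_zero_iff, norm_eq_zero, sub_eq_zero] at hjk_term
  exact hjk_term.symm

theorem permProj_eq_self_of_lapSup_eq_zero (ha_nonneg : ∀ j k, 0 ≤ a j k)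
    (ha_symm : ∀ j k, a j k = a k j)
    (ha_conn : (SimpleGraph.fromRel fun j k => 0 < a j k).Connected) {X : QMat n}
    (hX : lapSup a X = 0) : permProj X = X := by
  have hadj : ∀ σ ∈ {σ : Equiv.Perm (Fin n) | ∃ u v,
      (SimpleGraph.fromRel fun j k => 0 < a j k).Adj u v ∧ σ = Equiv.swap u v},
      σ ∈ MulAction.stabilizer (Equiv.Perm (Fin n)) X := by
    rintro _ ⟨u, v, ⟨huv, hauv⟩, rfl⟩
    simp only [ha_symm v u, or_self] at hauv
    rcases huv.lt_or_gt with h | h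
    · exact swap_smul_eq_of_lapSup_eq_zero ha_nonneg hX h hauv
    · rw [Equiv.swap_comm]
      exact swap_smul_eq_of_lapSup_eq_zero ha_nonneg hX h (ha_symm u v ▸ hauv)
  have hstab := (Subgroup.closure_le _).2 hadj
  rw [ha_conn.closure_swaps_eq_top, top_le_iff] at hstab
  exact permProj_eq_self_of_forall_perm_smul_eq fun π =>
    MulAction.mem_stabilizer_iff.1 (hstab ▸ Subgroup.mem_top π)

theorem mul_norm_sq_le_re_inner_lapSup (ha_nonneg : ∀ j k, 0 ≤ a j k)
    (ha_symm : ∀ j k, a j k = a k j)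
    (ha_conn : (SimpleGraph.fromRel fun j k => 0 < a j k).Connected) {lam : ℝ}
    (hlam : IsLeast {r : ℝ | r ≠ 0 ∧ ∃ X : QMat n, X ≠ 0 ∧ lapSup a X = r • X} lam)
    {X : QMat n} (hX : permProj X = 0) : lam * ‖X‖ ^ 2 ≤ RCLike.re ⟪X, lapSup a X⟫_ℂ := by
  refine (isSymmetric_lapSupₗ a).mul_norm_sq_le_re_inner_apply
    (fun μ Y hμ hY hYμ => hlam.2 ⟨hμ, Y, hY, ?_⟩) fun Z hZ => ?_
  · rw [← lapSupₗ_apply, hYμ, RCLike.real_smul_eq_coe_smul (K := ℂ)]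
  · rw [← permProj_eq_self_of_lapSup_eq_zero ha_nonneg ha_symm ha_conn hZ, ← permProjₗ_apply,
      isSymmetric_permProjₗ, permProjₗ_apply, hX, inner_zero_right]

end Kernel

theorem norm_sub_permProj_le_div {n : ℕ} {ι : Type} [Fintype ι] {hbar : ℝ} {H : QMat n}
    {γ : ι → ℝ} {L : ι → QMat n} {a : Fin n → Fin n → ℝ} (ha_nonneg : ∀ j k, 0 ≤ a j k)
    (ha_symm : ∀ j k, a j k = a k j)
    (ha_conn : (SimpleGraph.fromRel fun j k => 0 < a j k).Connected) {lam : ℝ}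
    (hlam_pos : 0 < lam)
    (hlam : IsLeast {r : ℝ | r ≠ 0 ∧ ∃ X : QMat n, X ≠ 0 ∧ lapSup a X = r • X} lam) {opA : ℝ}
    (hopA_nonneg : 0 ≤ opA) (hopA : ∀ X : QMat n, ‖drift hbar H γ L X‖ ≤ opA * ‖X‖) {K : ℝ}
    (hK : 0 < K) {ρ : ℝ → QMat n} (hρ : ∀ t ≥ (0 : ℝ), (ρ t).PosSemidef ∧ (ρ t).trace = 1)
    (hderiv : ∀ t ≥ (0 : ℝ), HasDerivAt ρ (drift hbar H γ L (ρ t) + K • coupling a (ρ t)) t)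
    (hinit : permProj (ρ 0) = ρ 0) :
    ∀ t ≥ (0 : ℝ), ‖ρ t - permProj (ρ t)‖ ≤ opA / (K * lam) := by
  set D := fun t => drift hbar H γ L (ρ t) + K • coupling a (ρ t)
  let P : QMat n →L[ℝ] QMat n := ((permProjₗ n).restrictScalars ℝ).toContinuousLinearMap
  refine norm_le_of_re_inner_deriv_le (𝕜 := ℂ) (y' := fun t => D t - permProj (D t))
    (mul_pos hK hlam_pos) (fun t ht => (hderiv t ht).sub (P.hasFDerivAt.comp_hasDerivAt t
      (hderiv t ht))) (by rw [hinit, sub_self, norm_zero]; positivity) fun t ht => ?_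
  set y := ρ t - permProj (ρ t)
  have hρ_norm : ‖ρ t‖ ≤ 1 := norm_le_one_of_posSemidef_of_trace_eq_one (hρ t ht).1 (hρ t ht).2
  have hdrift : RCLike.re ⟪y, drift hbar H γ L (ρ t)⟫_ℂ ≤ opA * ‖y‖ := calc
    _ ≤ ‖y‖ * ‖drift hbar H γ L (ρ t)‖ := re_inner_le_norm _ _
    _ ≤ ‖y‖ * (opA * 1) := by gcongr; exact (hopA _).trans (by gcongr)
    _ = opA * ‖y‖ := by ring
  have hgap : lam * ‖y‖ ^ 2 ≤ RCLike.re ⟪y, lapSup a y⟫_ℂ :=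
    mul_norm_sq_le_re_inner_lapSup ha_nonneg ha_symm ha_conn hlam (permProj_sub_permProj _)
  have hlap : lapSup a y = lapSup a (ρ t) := by
    rw [← lapSupₗ_apply, map_sub, lapSupₗ_apply, lapSupₗ_apply, lapSup_permProj, sub_zero]
  have hsplit : RCLike.re ⟪y, D t - permProj (D t)⟫_ℂ =
      RCLike.re ⟪y, drift hbar H γ L (ρ t)⟫_ℂ - K * RCLike.re ⟪y, lapSup a y⟫_ℂ := by
    rw [inner_sub_right, inner_sub_permProj_permProj, sub_zero, inner_add_right,
      coupling_eq_neg_lapSup, hlap, smul_neg, inner_neg_right,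
      RCLike.real_smul_eq_coe_smul (K := ℂ), inner_smul_right, map_add, map_neg,
      RCLike.re_ofReal_mul, sub_eq_add_neg]
  rw [hsplit]
  nlinarith

theorem stmt10_general {n : ℕ} {ι : Type} [Fintype ι] (hbar : ℝ)
    (H : QMat n)
    (γ : ι → ℝ) (L : ι → QMat n)
    -- symmetric nonnegative weights with zero diagonal and connected graph
    (a : Fin n → Fin n → ℝ) (ha_nonneg : ∀ j k, 0 ≤ a j k)
    (ha_symm : ∀ j k, a j k = a k j)
    (ha_conn : (SimpleGraph.fromRel fun j k => 0 < a j k).Connected)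
    -- `lam` is the smallest nonzero eigenvalue of the induced Laplacian superoperator `𝒬`
    (lam : ℝ) (hlam_pos : 0 < lam)
    (hlam : IsLeast {r : ℝ | r ≠ 0 ∧ ∃ X : QMat n, X ≠ 0 ∧ lapSup a X = r • X} lam)
    -- `opA` is the operator norm of `𝒜` w.r.t. the Frobenius norm
    (opA : ℝ)
    (hopA : IsLeast {c : ℝ | 0 ≤ c ∧ ∀ X : QMat n, ‖drift hbar H γ L X‖ ≤ c * ‖X‖} opA) :
    (∀ K > (0 : ℝ),
      ∀ ρ : ℝ → QMat n,
        (∀ t ≥ (0 : ℝ), (ρ t).PosSemidef ∧ (ρ t).trace = 1) →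
        (∀ t ≥ (0 : ℝ), HasDerivAt ρ (drift hbar H γ L (ρ t) + K • coupling a (ρ t)) t) →
        permProj (ρ 0) = ρ 0 →
        ∀ t ≥ (0 : ℝ), ‖ρ t - permProj (ρ t)‖ ≤ opA / (K * lam)) ∧
    (∀ η > (0 : ℝ), ∃ Kstar > (0 : ℝ), ∀ K ≥ Kstar,
      ∀ ρ : ℝ → QMat n,
        (∀ t ≥ (0 : ℝ), (ρ t).PosSemidef ∧ (ρ t).trace = 1) →
        (∀ t ≥ (0 : ℝ), HasDerivAt ρ (drift hbar H γ L (ρ t) + K • coupling a (ρ t)) t) →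
        permProj (ρ 0) = ρ 0 →
        ∀ t ≥ (0 : ℝ), ‖ρ t - permProj (ρ t)‖ ≤ η) := by
  obtain ⟨hopA_nonneg, hopA_bound⟩ := hopA.1
  refine ⟨fun K hK ρ hρ hderiv hinit => norm_sub_permProj_le_div ha_nonneg ha_symm ha_conn
    hlam_pos hlam hopA_nonneg hopA_bound hK hρ hderiv hinit,
    fun η hη => ⟨opA / (lam * η) + 1, by positivity, fun K hK ρ hρ hderiv hinit t ht => ?_⟩⟩
  have hK_pos : 0 < K := by linarith [show 0 ≤ opA / (lam * η) by positivity]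
  refine (norm_sub_permProj_le_div ha_nonneg ha_symm ha_conn hlam_pos hlam hopA_nonneg hopA_bound
    hK_pos hρ hderiv hinit t ht).trans ?_
  rw [div_le_iff₀ (by positivity)]
  calc opA = opA / (lam * η) * (lam * η) := (div_mul_cancel₀ _ (by positivity)).symm
    _ ≤ K * (lam * η) := by gcongr; linarith
    _ = η * (K * lam) := by ring

theorem stmt10 {n : ℕ} (hn : 2 ≤ n) {ι : Type} [Fintype ι] (hbar : ℝ) (hhbar : 0 < hbar)
    (H : QMat n) (hH : H.IsHermitian)
    (γ : ι → ℝ) (hγ : ∀ l, 0 < γ l) (L : ι → QMat n)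
    -- symmetric nonnegative weights with zero diagonal and connected graph
    (a : Fin n → Fin n → ℝ) (ha_nonneg : ∀ j k, 0 ≤ a j k)
    (ha_symm : ∀ j k, a j k = a k j) (ha_diag : ∀ j, a j j = 0)
    (ha_conn : (SimpleGraph.fromRel fun j k => 0 < a j k).Connected)
    -- `lam` is the smallest nonzero eigenvalue of the induced Laplacian superoperator `𝒬`
    (lam : ℝ) (hlam_pos : 0 < lam)
    (hlam : IsLeast {r : ℝ | r ≠ 0 ∧ ∃ X : QMat n, X ≠ 0 ∧ lapSup a X = r • X} lam)
    -- `opA` is the operator norm of `𝒜` w.r.t. the Frobenius norm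
    (opA : ℝ)
    (hopA : IsLeast {c : ℝ | 0 ≤ c ∧ ∀ X : QMat n, ‖drift hbar H γ L X‖ ≤ c * ‖X‖} opA) :
    (∀ K > (0 : ℝ),
      ∀ ρ : ℝ → QMat n,
        (∀ t ≥ (0 : ℝ), (ρ t).PosSemidef ∧ (ρ t).trace = 1) →
        (∀ t ≥ (0 : ℝ), HasDerivAt ρ (drift hbar H γ L (ρ t) + K • coupling a (ρ t)) t) →
        permProj (ρ 0) = ρ 0 →
        ∀ t ≥ (0 : ℝ), ‖ρ t - permProj (ρ t)‖ ≤ opA / (K * lam)) ∧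
    (∀ η > (0 : ℝ), ∃ Kstar > (0 : ℝ), ∀ K ≥ Kstar,
      ∀ ρ : ℝ → QMat n,
        (∀ t ≥ (0 : ℝ), (ρ t).PosSemidef ∧ (ρ t).trace = 1) →
        (∀ t ≥ (0 : ℝ), HasDerivAt ρ (drift hbar H γ L (ρ t) + K • coupling a (ρ t)) t) →
        permProj (ρ 0) = ρ 0 →
        ∀ t ≥ (0 : ℝ), ‖ρ t - permProj (ρ t)‖ ≤ η) :=
  stmt10_general hbar H γ L a ha_nonneg ha_symm ha_conn lam hlam_pos hlam opA hopA

end
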